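/- arXiv:2504.05175 — 3 statements merged into one kernel-verified Lean document; each statement's English description precedes it below -/
import Mathlib

section
/- Let X be a finite topological T₀-space and let φ : ℝ≥0 × X → X be a semiflow. Then for every t ∈ ℝ≥0 and every x ∈ X, φ(t,x) ≤ x in the specialization order (equivalently, φ(t,x) ⤳ x, i.e., φ(t,x) belongs to the minimal open set U_x containing x). -/
open NNReal
open Topology Filter

/-- A semiflow on a topological space `X`: a jointly continuous map
`φ : ℝ≥0 × X → X` with `φ 0 x = x` and `φ s (φ t x) = φ (s + t) x`. -/
def IsSemiflow {X : Type*} [TopologicalSpace X] (φ : ℝ≥0 → X → X) : Prop :=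
  Continuous (fun p : ℝ≥0 × X => φ p.1 p.2) ∧
  (∀ x : X, φ 0 x = x) ∧
  ∀ (s t : ℝ≥0) (x : X), φ s (φ t x) = φ (s + t) x

/-- A semiflow is trivial if every time-`t` map is the identity. -/
def IsTrivialSemiflow {X : Type*} [TopologicalSpace X] (φ : ℝ≥0 → X → X) : Prop :=
  ∀ (t : ℝ≥0) (x : X), φ t x = x

/-- `x` is a down beat point: `U_x \ {x}` has a greatest element in the
specialization order (`y ⤳ x` means `y ≤ x`, i.e. `y ∈ U_x`). -/
def IsDownBeatPoint {X : Type*} [TopologicalSpace X] (x : X) : Prop :=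
  ∃ m : X, (m ⤳ x ∧ m ≠ x) ∧ ∀ y : X, y ⤳ x → y ≠ x → y ⤳ m

/-- `x` is an up beat point: `F_x \ {x}` has a least element in the
specialization order. -/
def IsUpBeatPoint {X : Type*} [TopologicalSpace X] (x : X) : Prop :=
  ∃ m : X, (x ⤳ m ∧ m ≠ x) ∧ ∀ y : X, x ⤳ y → y ≠ x → m ⤳ y

/-!
In a finite space `U_x` is an open neighbourhood of `x`, so by continuity `φ s x ∈ U_x` for all
small `s`, and by finiteness there is one `ε > 0` that works for every `x`. The times `t` with
`φ t x ⤳ x` for all `x` form an additive submonoid of `ℝ≥0` (by the semigroup law and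
transitivity of `⤳`), and a submonoid containing `[0, ε)` is everything, as `t = n • (t / n)`.
-/

lemma AlexandrovDiscrete.eventually_specializes {X : Type*} [TopologicalSpace X]
    [AlexandrovDiscrete X] (x : X) : ∀ᶠ y in 𝓝 x, y ⤳ x :=
  mem_of_superset (nhdsKer_singleton_subset_iff_mem_nhds.mp subset_rfl)
    fun _ ↦ mem_nhdsKer_singleton.mp

lemma NNReal.addSubmonoid_eq_top_of_mem_nhds_zero (S : AddSubmonoid ℝ≥0)
    (hS : (S : Set ℝ≥0) ∈ 𝓝 0) : S = ⊤ := by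
  refine (AddSubmonoid.eq_top_iff' S).mpr fun t ↦ ?_
  obtain ⟨n, hmem, hn⟩ :=
    (((tendsto_const_div_atTop_nhds_zero_nat t).eventually hS).and (eventually_ge_atTop 1)).exists
  have hn0 : (n : ℝ≥0) ≠ 0 := by exact_mod_cast (Nat.one_le_iff_ne_zero.mp hn)
  simpa [nsmul_eq_mul, mul_div_cancel₀ _ hn0] using S.nsmul_mem hmem n

namespace IsSemiflow

variable {X : Type*} [TopologicalSpace X] {φ : ℝ≥0 → X → X}

def specializingTimes (hφ : IsSemiflow φ) : AddSubmonoid ℝ≥0 where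
  carrier := {t | ∀ x, φ t x ⤳ x}
  zero_mem' x := by rw [hφ.2.1]
  add_mem' {s t} hs ht x := hφ.2.2 s t x ▸ (hs (φ t x)).trans (ht x)

lemma eventually_specializes [Finite X] (hφ : IsSemiflow φ) :
    ∀ᶠ t in 𝓝 0, ∀ x, φ t x ⤳ x := by
  refine eventually_all.mpr fun x ↦ ?_
  have hcont : Continuous (φ · x) := hφ.1.comp (Continuous.prodMk_left x)
  simpa only [hφ.2.1] using
    hcont.continuousAt.eventually (AlexandrovDiscrete.eventually_specializes (φ 0 x))

end IsSemiflow

theorem semiflow_le_id_general {X : Type*} [TopologicalSpace X] [Finite X]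
    (φ : ℝ≥0 → X → X) (hφ : IsSemiflow φ) :
    ∀ (t : ℝ≥0) (x : X), φ t x ⤳ x := by
  have htop : hφ.specializingTimes = ⊤ :=
    NNReal.addSubmonoid_eq_top_of_mem_nhds_zero _ hφ.eventually_specializes
  exact (AddSubmonoid.eq_top_iff' _).mp htop

/-- For a semiflow on a finite `T₀`-space, `φ t x ⤳ x` for all `t` and `x`,
i.e. `φ t x` lies in the minimal open set `U_x`. -/
theorem semiflow_le_id {X : Type*} [TopologicalSpace X] [Finite X] [T0Space X]
    (φ : ℝ≥0 → X → X) (hφ : IsSemiflow φ) :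
    ∀ (t : ℝ≥0) (x : X), φ t x ⤳ x :=
  semiflow_le_id_general φ hφ
end

section
/- Let X be a finite topological T₀-space. If X has no down beat points, then every semiflow φ : ℝ≥0 × X → X on X is trivial. -/
open NNReal

/-!
Induct along the specialization order, which is well founded on a finite `T₀`-space. Let every
`φ t` fix the points strictly below `x`. By continuity at time `0`, `φ t x` lies in the minimal open
set `U_x` for small `t`; a continuous map preserves specialization, so if `φ t x ≠ x` then every
`y < x` satisfies `y = φ t y ⤳ φ t x`, and `φ t x` would be the greatest element of `U_x \ {x}`.
Hence `φ t x = x` for small `t`, and then for all `t` by the semigroup law.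
-/

open Filter Topology

section Specialization

variable {X : Type*} [TopologicalSpace X]

theorem wellFounded_specializes_and_ne [Finite X] [T0Space X] :
    WellFounded fun a b : X => a ⤳ b ∧ a ≠ b :=
  @Finite.wellFounded_of_trans_of_irrefl _ _ _
    ⟨fun _ _ _ hab hbc => ⟨hab.1.trans hbc.1, fun hac => hab.2 (hab.1.antisymm (hac ▸ hbc.1)).eq⟩⟩
    ⟨fun _ h => h.2 rfl⟩

theorem ContinuousAt.eventually_specializes [AlexandrovDiscrete X] {T : Type*}
    [TopologicalSpace T] {f : T → X} {a : T} (hf : ContinuousAt f a) :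
    ∀ᶠ b in 𝓝 a, f b ⤳ f a := by
  have hU : nhdsKer {f a} ∈ 𝓝 (f a) := isOpen_nhdsKer.mem_nhds (subset_nhdsKer rfl)
  simpa only [mem_nhdsKer_singleton] using hf.eventually_mem hU

theorem Continuous.apply_eq_self_of_not_isDownBeatPoint {f : X → X} (hf : Continuous f) {x : X}
    (hx : ¬ IsDownBeatPoint x) (hfx : f x ⤳ x) (hfix : ∀ y, y ⤳ x → y ≠ x → f y = y) :
    f x = x := by
  by_contra hne
  exact hx ⟨f x, ⟨hfx, hne⟩, fun y hy hyx => hfix y hy hyx ▸ hy.map hf⟩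

end Specialization

theorem forall_apply_eq_self_of_eventually {X : Type*} {φ : ℝ≥0 → X → X}
    (hadd : ∀ (s t : ℝ≥0) (x : X), φ s (φ t x) = φ (s + t) x) {x : X}
    (h : ∀ᶠ t in 𝓝 0, φ t x = x) (t : ℝ≥0) : φ t x = x := by
  have hnsmul : ∀ s, φ s x = x → ∀ n : ℕ, φ (n • s) x = x := by
    intro s hs n
    induction n with
    | zero => simpa using h.self_of_nhds
    | succ n ih => rw [succ_nsmul', ← hadd, ih, hs]
  obtain ⟨n, hfix, hn⟩ :=
    (((tendsto_const_div_atTop_nhds_zero_nat t).eventually h).and (eventually_ne_atTop 0)).exists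
  calc φ t x = φ (n • (t / n)) x := by rw [nsmul_eq_mul, mul_div_cancel₀ _ (Nat.cast_ne_zero.2 hn)]
    _ = x := hnsmul _ hfix n

/-- If a finite `T₀`-space has no down beat points, then every semiflow on it
is trivial. -/
theorem semiflow_trivial_of_no_downBeatPoint {X : Type*} [TopologicalSpace X] [Finite X]
    [T0Space X] (hdown : ∀ x : X, ¬ IsDownBeatPoint x)
    (φ : ℝ≥0 → X → X) (hφ : IsSemiflow φ) : IsTrivialSemiflow φ := by
  obtain ⟨hφc, hφ0, hadd⟩ := hφ
  have hcont : ∀ t, Continuous (φ t) := fun t => hφc.comp (continuous_const.prodMk continuous_id)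
  intro t x
  induction x using (wellFounded_specializes_and_ne (X := X)).induction generalizing t with
  | _ x ih =>
  refine forall_apply_eq_self_of_eventually hadd ?_ t
  have horbit : Continuous fun t => φ t x := hφc.comp (continuous_id.prodMk continuous_const)
  have hnear : ∀ᶠ t in 𝓝 0, φ t x ⤳ x := by
    simpa only [hφ0] using (horbit.continuousAt (x := 0)).eventually_specializes
  filter_upwards [hnear] with t ht
  exact (hcont t).apply_eq_self_of_not_isDownBeatPoint (hdown x) ht
    fun y hy hyx => ih y ⟨hy, hyx⟩ t
end

section
/- Let X be a finite topological T₀-space and let φ : ℝ≥0 × X → X be a semiflow. Then the time-one map r := φ(1,·) : X → X is idempotent, r ∘ r = r; in particular r is a retraction of X onto its image r(X), i.e., r(a) = a for every a ∈ r(X). -/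
open NNReal

/-!
In a finite space the smallest neighbourhood of `x` is `{w | w ⤳ x}`, so continuity at time `0`
gives `φ t x ⤳ x` for small `t`; the times with this property form an additive submonoid of `ℝ≥0`,
hence all times. So every orbit `t ↦ φ t x` is monotone for the specialization order, a partial
order on the finite `T₀` space, and is therefore constant, say equal to `y`, on some `(0, b]`. Then
`y` is fixed by `φ s` for `s < b / 2`, hence for all `s`, and the orbit equals `y` at every positive
time; in particular `φ 2 = φ 1`.
-/

open Filter Topology Set

theorem AddSubmonoid.eq_top_of_mem_nhds_zero {K : Type*} [Semifield K] [CharZero K]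
    [TopologicalSpace K] [ContinuousSMul ℚ≥0 K] [ContinuousMul K] {S : AddSubmonoid K}
    (hS : (S : Set K) ∈ 𝓝 0) : S = ⊤ := by
  refine eq_top_iff.2 fun s _ => ?_
  obtain ⟨n, hsn, hn⟩ :=
    ((tendsto_const_div_atTop_nhds_zero_nat s).eventually hS |>.and (eventually_ne_atTop 0)).exists
  have hs : n • (s / n) = s := by
    rw [nsmul_eq_mul, mul_div_cancel₀ s (Nat.cast_ne_zero.2 hn)]
  exact hs ▸ S.nsmul_mem hsn n

theorem Monotone.exists_forall_Ioc_eq {α β : Type*} [Preorder α] [NoMaxOrder α] [PartialOrder β]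
    [Finite β] {g : α → β} (hg : Monotone g) (a : α) :
    ∃ b > a, ∀ t ∈ Ioc a b, g t = g b := by
  obtain ⟨b, hab, hmin⟩ := exists_minimalFor_of_wellFoundedLT (a < ·) g (exists_gt a)
  exact ⟨b, hab, fun t ht => (hg ht.2).antisymm (hmin ht.1 (hg ht.2))⟩

namespace IsSemiflow

variable {X : Type*} [TopologicalSpace X] {φ : ℝ≥0 → X → X}

theorem apply_zero (hφ : IsSemiflow φ) (x : X) : φ 0 x = x :=
  hφ.2.1 x

theorem apply_apply (hφ : IsSemiflow φ) (s t : ℝ≥0) (x : X) : φ s (φ t x) = φ (s + t) x :=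
  hφ.2.2 s t x

theorem continuous_apply (hφ : IsSemiflow φ) (t : ℝ≥0) : Continuous (φ t) :=
  hφ.1.comp (continuous_const.prodMk continuous_id)

theorem continuous_orbit (hφ : IsSemiflow φ) (x : X) : Continuous (φ · x) :=
  hφ.1.comp (continuous_id.prodMk continuous_const)

theorem apply_apply_of_le (hφ : IsSemiflow φ) {t t' : ℝ≥0} (h : t ≤ t') (x : X) :
    φ (t' - t) (φ t x) = φ t' x := by
  rw [hφ.apply_apply, tsub_add_cancel_of_le h]

def stabilizer (hφ : IsSemiflow φ) (x : X) : AddSubmonoid ℝ≥0 where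
  carrier := {t | φ t x = x}
  zero_mem' := hφ.apply_zero x
  add_mem' {s t} (hs : φ s x = x) (ht : φ t x = x) := show φ (s + t) x = x by
    rw [← hφ.apply_apply, ht, hs]

def specializationTimes (hφ : IsSemiflow φ) (x : X) : AddSubmonoid ℝ≥0 where
  carrier := {t | φ t x ⤳ x}
  zero_mem' := by simp only [mem_ofPred_eq, hφ.apply_zero x, specializes_rfl]
  add_mem' {s t} (hs : φ s x ⤳ x) (ht : φ t x ⤳ x) := show φ (s + t) x ⤳ x by
    rw [← hφ.apply_apply]
    exact (ht.map (hφ.continuous_apply s)).trans hs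

theorem apply_specializes [AlexandrovDiscrete X] (hφ : IsSemiflow φ) (t : ℝ≥0) (x : X) :
    φ t x ⤳ x := by
  suffices hS : (hφ.specializationTimes x : Set ℝ≥0) ∈ 𝓝 0 by
    exact (AddSubmonoid.eq_top_iff' _).1 (AddSubmonoid.eq_top_of_mem_nhds_zero hS) t
  have hx : nhdsKer {x} ∈ 𝓝 x := isOpen_nhdsKer.mem_nhds (subset_nhdsKer rfl)
  filter_upwards [(hφ.continuous_orbit x).tendsto' 0 x (hφ.apply_zero x) hx] with t ht using mem_nhdsKer_singleton.1 ht

theorem apply_specializes_of_le [AlexandrovDiscrete X] (hφ : IsSemiflow φ) {t t' : ℝ≥0}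
    (h : t ≤ t') (x : X) : φ t' x ⤳ φ t x :=
  hφ.apply_apply_of_le h x ▸ hφ.apply_specializes _ _

theorem apply_eq_of_forall_Ioc_eq (hφ : IsSemiflow φ) {x y : X} {b : ℝ≥0} (hb : 0 < b)
    (hxy : ∀ t ∈ Ioc 0 b, φ t x = y) {t : ℝ≥0} (ht : 0 < t) : φ t x = y := by
  have hy : hφ.stabilizer y = ⊤ := by
    refine AddSubmonoid.eq_top_of_mem_nhds_zero (mem_of_superset (Iio_mem_nhds (half_pos hb)) ?_)
    intro s (hs : s < b / 2)
    calc φ s y = φ s (φ (b / 2) x) := by rw [hxy (b / 2) ⟨half_pos hb, half_le_self b⟩]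
      _ = φ (s + b / 2) x := hφ.apply_apply _ _ _
      _ = y := hxy _ ⟨by positivity, (add_le_add_left hs.le _).trans (add_halves b).le⟩
  have hm : 0 < min t b := lt_min ht hb
  calc φ t x = φ (t - min t b) (φ (min t b) x) := (hφ.apply_apply_of_le (min_le_left t b) x).symm
    _ = y := by rw [hxy _ ⟨hm, min_le_right t b⟩]; exact (AddSubmonoid.eq_top_iff' _).1 hy _

theorem apply_eq_apply_of_pos [Finite X] [T0Space X] (hφ : IsSemiflow φ) (x : X) {t t' : ℝ≥0}
    (ht : 0 < t) (ht' : 0 < t') : φ t x = φ t' x := by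
  -- In the specialization order `y ≤ z ↔ z ⤳ y`, so orbits are monotone.
  let := specializationOrder X
  have hmono : Monotone (φ · x) := fun _ _ h => hφ.apply_specializes_of_le h x
  obtain ⟨b, hb, hconst⟩ := hmono.exists_forall_Ioc_eq 0
  rw [hφ.apply_eq_of_forall_Ioc_eq hb hconst ht, hφ.apply_eq_of_forall_Ioc_eq hb hconst ht']

end IsSemiflow

/-- For a semiflow on a finite `T₀`-space, the time-one map `r := φ 1` is
idempotent; in particular it is a retraction onto its image. -/
theorem semiflow_time_one_idempotent {X : Type*} [TopologicalSpace X] [Finite X]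
    [T0Space X] (φ : ℝ≥0 → X → X) (hφ : IsSemiflow φ) :
    (φ 1) ∘ (φ 1) = φ 1 ∧ ∀ a ∈ Set.range (φ 1), φ 1 a = a := by
  have h : ∀ x, φ 1 (φ 1 x) = φ 1 x := fun x =>
    (hφ.apply_apply 1 1 x).trans (hφ.apply_eq_apply_of_pos x (by positivity) one_pos)
  exact ⟨funext h, by rintro _ ⟨x, rfl⟩; exact h x⟩
end
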